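/- arXiv:2412.00798 — 10 statements merged into one kernel-verified Lean document; each statement's English description precedes it below -/
import Mathlib

section
/- For every combinatorial rising bandit instance and every horizon T, some constant policy is optimal: there exists a super arm S* ∈ 𝒮 such that the allocation assigning all T pulls to S* maximizes the expected cumulative reward, i.e. Σ_{i∈S*} Σ_{n=1}^{T} μ_i(n) ≥ J(f) for every allocation f : 𝒮 → ℕ with Σ_{S∈𝒮} f(S) = T. -/
open Finset

/-- Number of pulls of base arm `i` under the allocation `f` over the super-arm set `𝒮`:
`N_i(f) = Σ_{S ∈ 𝒮, i ∈ S} f(S)`. -/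
def pulls {K : ℕ} (𝒮 : Finset (Finset (Fin K))) (f : Finset (Fin K) → ℕ) (i : Fin K) : ℕ :=
  ∑ S ∈ 𝒮.filter (fun S => i ∈ S), f S

/-- Expected cumulative reward of the allocation `f`:
`J(f) = Σ_{i=1}^K Σ_{n=1}^{N_i(f)} μ_i(n)`. -/
noncomputable def cumReward {K : ℕ} (μ : Fin K → ℕ → ℝ) (𝒮 : Finset (Finset (Fin K)))
    (f : Finset (Fin K) → ℕ) : ℝ :=
  ∑ i : Fin K, ∑ n ∈ Finset.Icc 1 (pulls 𝒮 f i), μ i n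

/-!
For a nondecreasing `g` the average `(1/N) Σ_{n ≤ N} g n` is nondecreasing in `N`, so
`T · Σ_{n ≤ N_i} μ_i n ≤ N_i · Σ_{n ≤ T} μ_i n`. Summing over the base arms and regrouping
the pull counts by super arm gives `T · J(f) ≤ Σ_S f(S) · V(S)`, where
`V(S) = Σ_{i ∈ S} Σ_{n ≤ T} μ_i n` is the reward of the constant policy on `S`.
Since `Σ_S f(S) = T`, the right side is at most `T · max_S V(S)`.
-/

theorem Monotone.mul_sum_Icc_le_mul_sum_Icc {g : ℕ → ℝ} (hg : Monotone g) {N T : ℕ}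
    (hNT : N ≤ T) :
    (T : ℝ) * ∑ n ∈ Icc 1 N, g n ≤ N * ∑ n ∈ Icc 1 T, g n := by
  have hsplit : ∑ n ∈ Icc 1 T, g n = ∑ n ∈ Icc 1 N, g n + ∑ n ∈ Ioc N T, g n := by
    simp only [show ∀ m, Icc 1 m = Ioc 0 m from Icc_add_one_left_eq_Ioc 0]
    rw [sum_Ioc_consecutive _ N.zero_le hNT]
  have hhead : ∑ n ∈ Icc 1 N, g n ≤ N * g (N + 1) := by
    simpa using sum_le_card_nsmul (Icc 1 N) g (g (N + 1)) fun n hn => hg (by grind)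
  have htail : (T - N : ℝ) * g (N + 1) ≤ ∑ n ∈ Ioc N T, g n := by
    simpa [Nat.cast_sub hNT] using card_nsmul_le_sum (Ioc N T) g (g (N + 1))
      fun n hn => hg (mem_Ioc.mp hn).1
  have hTN : (0 : ℝ) ≤ T - N := sub_nonneg.mpr (by exact_mod_cast hNT)
  rw [hsplit]
  nlinarith [mul_le_mul_of_nonneg_left hhead hTN,
    mul_le_mul_of_nonneg_left htail (Nat.cast_nonneg N)]

theorem pulls_le_sum {K : ℕ} (𝒮 : Finset (Finset (Fin K))) (f : Finset (Fin K) → ℕ)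
    (i : Fin K) : pulls 𝒮 f i ≤ ∑ S ∈ 𝒮, f S :=
  sum_le_sum_of_subset (filter_subset _ _)

theorem sum_pulls_mul {K : ℕ} (𝒮 : Finset (Finset (Fin K))) (f : Finset (Fin K) → ℕ)
    (c : Fin K → ℝ) :
    ∑ i, (pulls 𝒮 f i : ℝ) * c i = ∑ S ∈ 𝒮, (f S : ℝ) * ∑ i ∈ S, c i := by
  simp only [pulls, Nat.cast_sum, sum_mul, mul_sum]
  exact sum_comm' fun _ _ => by simp [and_comm]

theorem mul_cumReward_le {K : ℕ} {μ : Fin K → ℕ → ℝ} (hmono : ∀ i, Monotone (μ i))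
    (𝒮 : Finset (Finset (Fin K))) {f : Finset (Fin K) → ℕ} {T : ℕ} (hT : ∑ S ∈ 𝒮, f S = T) :
    T * cumReward μ 𝒮 f ≤ ∑ S ∈ 𝒮, (f S : ℝ) * ∑ i ∈ S, ∑ n ∈ Icc 1 T, μ i n := by
  rw [cumReward, mul_sum, ← sum_pulls_mul]
  exact sum_le_sum fun i _ =>
    (hmono i).mul_sum_Icc_le_mul_sum_Icc (hT ▸ pulls_le_sum 𝒮 f i)

theorem exists_constant_optimal_policy_general
    (K : ℕ) (μ : Fin K → ℕ → ℝ) (𝒮 : Finset (Finset (Fin K))) (T : ℕ)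
    (h𝒮 : 𝒮.Nonempty)
    (hmono : ∀ i, Monotone (μ i)) :
    ∃ Sstar ∈ 𝒮, ∀ f : Finset (Fin K) → ℕ, (∑ S ∈ 𝒮, f S) = T →
      cumReward μ 𝒮 f ≤ ∑ i ∈ Sstar, ∑ n ∈ Finset.Icc 1 T, μ i n := by
  obtain ⟨Sstar, hSstar, hmax⟩ :=
    exists_max_image 𝒮 (fun S => ∑ i ∈ S, ∑ n ∈ Icc 1 T, μ i n) h𝒮
  refine ⟨Sstar, hSstar, fun f hT => ?_⟩
  rcases Nat.eq_zero_or_pos T with rfl | hTpos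
  · have hpulls (i : Fin K) : pulls 𝒮 f i = 0 := Nat.le_zero.mp (hT ▸ pulls_le_sum 𝒮 f i)
    simp [cumReward, hpulls]
  refine le_of_mul_le_mul_left ?_ (Nat.cast_pos.mpr hTpos : (0 : ℝ) < T)
  calc (T : ℝ) * cumReward μ 𝒮 f
      ≤ ∑ S ∈ 𝒮, (f S : ℝ) * ∑ i ∈ S, ∑ n ∈ Icc 1 T, μ i n := mul_cumReward_le hmono 𝒮 hT
    _ ≤ ∑ S ∈ 𝒮, (f S : ℝ) * ∑ i ∈ Sstar, ∑ n ∈ Icc 1 T, μ i n :=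
        sum_le_sum fun S hS => mul_le_mul_of_nonneg_left (hmax S hS) (Nat.cast_nonneg _)
    _ = T * ∑ i ∈ Sstar, ∑ n ∈ Icc 1 T, μ i n := by
        rw [← sum_mul, ← Nat.cast_sum, hT]

/-- For every combinatorial rising bandit instance and every horizon `T`, some constant policy
is optimal: there is a super arm `Sstar ∈ 𝒮` such that allocating all `T` pulls to `Sstar`
maximizes the expected cumulative reward over all allocations. -/
theorem exists_constant_optimal_policy
    (K : ℕ) (μ : Fin K → ℕ → ℝ) (𝒮 : Finset (Finset (Fin K))) (T : ℕ)
    (h𝒮 : 𝒮.Nonempty)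
    (h0 : ∀ i n, 0 ≤ μ i n) (h1 : ∀ i n, μ i n ≤ 1)
    (hmono : ∀ i, Monotone (μ i))
    (hconc : ∀ i n, μ i (n + 2) - μ i (n + 1) ≤ μ i (n + 1) - μ i n) :
    ∃ Sstar ∈ 𝒮, ∀ f : Finset (Fin K) → ℕ, (∑ S ∈ 𝒮, f S) = T →
      cumReward μ 𝒮 f ≤ ∑ i ∈ Sstar, ∑ n ∈ Finset.Icc 1 T, μ i n :=
  exists_constant_optimal_policy_general K μ 𝒮 T h𝒮 hmono
end

section
/- Let f* be an optimal allocation over horizon T and let S₁, S₂ ∈ 𝒮 with f*(S₁) ≥ 1. Then the single-pull exchange from S₁ to S₂ does not improve the reward: Σ_{i∈S₁\S₂} μ_i(N_i(f*)) ≥ Σ_{i∈S₂\S₁} μ_i(N_i(f*)+1). -/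
/-!
Moving one pull from `S₁` to `S₂` gives another allocation of horizon `T`. Under it the arms of
`S₁ \ S₂` lose their last reward `μ_i(N_i)`, the arms of `S₂ \ S₁` gain `μ_i(N_i + 1)`, and all
other pull counts are unchanged, so optimality of `f*` is exactly the claimed inequality.
-/

open Finset

/-- Moves one pull from `S₁` to `S₂`; because of truncated subtraction this is only meaningful
when `1 ≤ f S₁`. -/
def exchange {α : Type*} [DecidableEq α] (f : α → ℕ) (S₁ S₂ : α) : α → ℕ :=
  fun S => f S + (if S = S₂ then 1 else 0) - (if S = S₁ then 1 else 0)

theorem exchange_add_ite_eq {α : Type*} [DecidableEq α] {f : α → ℕ} {S₁ : α} (S₂ : α)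
    (hpos : 1 ≤ f S₁) (S : α) :
    exchange f S₁ S₂ S + (if S = S₁ then 1 else 0) = f S + (if S = S₂ then 1 else 0) := by
  by_cases h₁ : S = S₁
  · subst h₁
    unfold exchange
    split_ifs <;> omega
  · simp [exchange, h₁]

theorem sum_add_ite_mem_eq_of_add_ite_eq {ι M : Type*} [DecidableEq ι] [AddCommMonoid M]
    (A : Finset ι) {g h : ι → M} {a b : ι} {c : M}
    (H : ∀ x, g x + (if x = a then c else 0) = h x + (if x = b then c else 0)) :
    ∑ x ∈ A, g x + (if a ∈ A then c else 0) = ∑ x ∈ A, h x + (if b ∈ A then c else 0) := by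
  rw [← sum_ite_eq' A a (fun _ => c), ← sum_ite_eq' A b (fun _ => c), ← sum_add_distrib,
    ← sum_add_distrib]
  exact sum_congr rfl fun x _ => H x

theorem sum_Icc_one_eq_of_add_ite_eq {α M : Type*} [DecidableEq α] [AddCommGroup M]
    (g : ℕ → M) {A B : Finset α} {i : α} {m n : ℕ}
    (h : m + (if i ∈ A then 1 else 0) = n + (if i ∈ B then 1 else 0)) :
    ∑ k ∈ Icc 1 m, g k
      = ∑ k ∈ Icc 1 n, g k + (if i ∈ B \ A then g (n + 1) else 0)
          - (if i ∈ A \ B then g n else 0) := by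
  have succ_top (N : ℕ) : ∑ k ∈ Icc 1 (N + 1), g k = ∑ k ∈ Icc 1 N, g k + g (N + 1) :=
    sum_Icc_succ_top (by omega) g
  by_cases hA : i ∈ A <;> by_cases hB : i ∈ B <;>
    simp only [hA, hB, if_true, if_false] at h <;> simp only [mem_sdiff, hA, hB, not_true,
      not_false_eq_true, and_true, and_false, if_true, if_false, add_zero, sub_zero]
  · rw [show m = n by omega]
  · obtain rfl : n = m + 1 := by omega
    rw [succ_top, add_sub_cancel_right]
  · rw [show m = n + 1 by omega, succ_top]
  · rw [show m = n by omega]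

section Exchange

variable {K : ℕ} {𝒮 : Finset (Finset (Fin K))} {f : Finset (Fin K) → ℕ}
  {S₁ S₂ : Finset (Fin K)}

theorem sum_exchange (hS₁ : S₁ ∈ 𝒮) (hS₂ : S₂ ∈ 𝒮) (hpos : 1 ≤ f S₁) :
    ∑ S ∈ 𝒮, exchange f S₁ S₂ S = ∑ S ∈ 𝒮, f S := by
  simpa [hS₁, hS₂] using sum_add_ite_mem_eq_of_add_ite_eq 𝒮 (exchange_add_ite_eq S₂ hpos)

theorem pulls_exchange_add_ite_eq (hS₁ : S₁ ∈ 𝒮) (hS₂ : S₂ ∈ 𝒮) (hpos : 1 ≤ f S₁) (i : Fin K) :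
    pulls 𝒮 (exchange f S₁ S₂) i + (if i ∈ S₁ then 1 else 0)
      = pulls 𝒮 f i + (if i ∈ S₂ then 1 else 0) := by
  simpa [pulls, hS₁, hS₂] using
    sum_add_ite_mem_eq_of_add_ite_eq (𝒮.filter (i ∈ ·)) (exchange_add_ite_eq S₂ hpos)

theorem cumReward_exchange (μ : Fin K → ℕ → ℝ) (hS₁ : S₁ ∈ 𝒮) (hS₂ : S₂ ∈ 𝒮)
    (hpos : 1 ≤ f S₁) :
    cumReward μ 𝒮 (exchange f S₁ S₂)
      = cumReward μ 𝒮 f + ∑ i ∈ S₂ \ S₁, μ i (pulls 𝒮 f i + 1)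
          - ∑ i ∈ S₁ \ S₂, μ i (pulls 𝒮 f i) := by
  unfold cumReward
  rw [sum_congr rfl fun i _ =>
      sum_Icc_one_eq_of_add_ite_eq (μ i) (pulls_exchange_add_ite_eq hS₁ hS₂ hpos i),
    sum_sub_distrib, sum_add_distrib, sum_ite_mem, sum_ite_mem, univ_inter, univ_inter]

end Exchange

theorem single_pull_exchange_no_gain_general
    (K : ℕ) (μ : Fin K → ℕ → ℝ) (𝒮 : Finset (Finset (Fin K))) (T : ℕ)
    (fstar : Finset (Fin K) → ℕ)
    (hsum : (∑ S ∈ 𝒮, fstar S) = T)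
    (hopt : ∀ f : Finset (Fin K) → ℕ, (∑ S ∈ 𝒮, f S) = T →
      cumReward μ 𝒮 f ≤ cumReward μ 𝒮 fstar)
    (S₁ S₂ : Finset (Fin K)) (hS₁ : S₁ ∈ 𝒮) (hS₂ : S₂ ∈ 𝒮)
    (hpos : 1 ≤ fstar S₁) :
    ∑ i ∈ S₂ \ S₁, μ i (pulls 𝒮 fstar i + 1) ≤ ∑ i ∈ S₁ \ S₂, μ i (pulls 𝒮 fstar i) := by
  have hle := hopt (exchange fstar S₁ S₂) ((sum_exchange hS₁ hS₂ hpos).trans hsum)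
  rw [cumReward_exchange μ hS₁ hS₂ hpos] at hle
  linarith

/-- If `fstar` is an optimal allocation and `fstar S₁ ≥ 1`, the single-pull exchange from
`S₁` to `S₂` does not improve the reward:
`Σ_{i∈S₁\S₂} μ_i(N_i(f*)) ≥ Σ_{i∈S₂\S₁} μ_i(N_i(f*)+1)`. -/
theorem single_pull_exchange_no_gain
    (K : ℕ) (μ : Fin K → ℕ → ℝ) (𝒮 : Finset (Finset (Fin K))) (T : ℕ)
    (h𝒮 : 𝒮.Nonempty)
    (h0 : ∀ i n, 0 ≤ μ i n) (h1 : ∀ i n, μ i n ≤ 1)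
    (hmono : ∀ i, Monotone (μ i))
    (hconc : ∀ i n, μ i (n + 2) - μ i (n + 1) ≤ μ i (n + 1) - μ i n)
    (fstar : Finset (Fin K) → ℕ)
    (hsum : (∑ S ∈ 𝒮, fstar S) = T)
    (hopt : ∀ f : Finset (Fin K) → ℕ, (∑ S ∈ 𝒮, f S) = T →
      cumReward μ 𝒮 f ≤ cumReward μ 𝒮 fstar)
    (S₁ S₂ : Finset (Fin K)) (hS₁ : S₁ ∈ 𝒮) (hS₂ : S₂ ∈ 𝒮)
    (hpos : 1 ≤ fstar S₁) :
    ∑ i ∈ S₂ \ S₁, μ i (pulls 𝒮 fstar i + 1) ≤ ∑ i ∈ S₁ \ S₂, μ i (pulls 𝒮 fstar i) :=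
  single_pull_exchange_no_gain_general K μ 𝒮 T fstar hsum hopt S₁ S₂ hS₁ hS₂ hpos
end

section
/- (Claim 1) Let f* be an optimal allocation over horizon T and let S₁, S₂ ∈ 𝒮 with f*(S₁) ≥ 1 and f*(S₂) ≥ 1. Then the terminal per-round rewards of the two selected super arms coincide: Σ_{i∈S₁\S₂} μ_i(N_i(f*)) = Σ_{i∈S₂\S₁} μ_i(N_i(f*)), and consequently Σ_{i∈S₁} μ_i(N_i(f*)) = Σ_{i∈S₂} μ_i(N_i(f*)). -/
/-!
Fix an optimal allocation and move one round from `S₁` to `S₂`. Only arms in the symmetric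
difference change their pull count, so the reward changes by
`Σ_{S₂ \ S₁} μ_i(N_i + 1) - Σ_{S₁ \ S₂} μ_i(N_i)`, which optimality makes nonpositive. Together with
the same move in the other direction and `μ_i(N_i) ≤ μ_i(N_i + 1)` this closes a cycle of
inequalities between the two terminal sums over the symmetric difference.
-/

open Finset

section
variable {K : ℕ} (𝒮 : Finset (Finset (Fin K)))

theorem pulls_add (f g : Finset (Fin K) → ℕ) (i : Fin K) :
    pulls 𝒮 (f + g) i = pulls 𝒮 f i + pulls 𝒮 g i :=
  sum_add_distrib

theorem pulls_single {S : Finset (Fin K)} (hS : S ∈ 𝒮) (i : Fin K) :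
    pulls 𝒮 (Pi.single S 1) i = if i ∈ S then 1 else 0 := by
  simp [pulls, hS]

theorem pulls_add_single {S : Finset (Fin K)} (hS : S ∈ 𝒮) (f : Finset (Fin K) → ℕ) (i : Fin K) :
    pulls 𝒮 (f + Pi.single S 1) i = if i ∈ S then pulls 𝒮 f i + 1 else pulls 𝒮 f i := by
  rw [pulls_add, pulls_single 𝒮 hS]
  split_ifs <;> rfl

variable (μ : Fin K → ℕ → ℝ)

theorem cumReward_add_single {S : Finset (Fin K)} (hS : S ∈ 𝒮) (f : Finset (Fin K) → ℕ) :
    cumReward μ 𝒮 (f + Pi.single S 1) = cumReward μ 𝒮 f + ∑ i ∈ S, μ i (pulls 𝒮 f i + 1) := by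
  have h (i : Fin K) : ∑ n ∈ Icc 1 (pulls 𝒮 (f + Pi.single S 1) i), μ i n
      = ∑ n ∈ Icc 1 (pulls 𝒮 f i), μ i n + if i ∈ S then μ i (pulls 𝒮 f i + 1) else 0 := by
    rw [pulls_add_single 𝒮 hS]
    split_ifs
    · exact sum_Icc_succ_top (Nat.le_add_left 1 _) _
    · rw [add_zero]
  simp only [cumReward, h, sum_add_distrib, sum_ite_mem, univ_inter]

theorem sum_sdiff_succ_le_sum_sdiff {S₁ S₂ : Finset (Fin K)} (hS₁ : S₁ ∈ 𝒮) (hS₂ : S₂ ∈ 𝒮)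
    (f : Finset (Fin K) → ℕ) (hf : 1 ≤ f S₁)
    (hopt : ∀ f' : Finset (Fin K) → ℕ, ∑ S ∈ 𝒮, f' S = ∑ S ∈ 𝒮, f S →
      cumReward μ 𝒮 f' ≤ cumReward μ 𝒮 f) :
    ∑ i ∈ S₂ \ S₁, μ i (pulls 𝒮 f i + 1) ≤ ∑ i ∈ S₁ \ S₂, μ i (pulls 𝒮 f i) := by
  obtain ⟨g, rfl⟩ : ∃ g, f = g + Pi.single S₁ 1 := by
    refine ⟨f - Pi.single S₁ 1, (tsub_add_cancel_of_le fun S => ?_).symm⟩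
    rcases eq_or_ne S S₁ with rfl | h
    · simpa using hf
    · simp [h]
  have hmass : ∑ S ∈ 𝒮, (g + Pi.single S₂ 1 : Finset (Fin K) → ℕ) S
      = ∑ S ∈ 𝒮, (g + Pi.single S₁ 1 : Finset (Fin K) → ℕ) S := by
    simp [sum_add_distrib, hS₁, hS₂]
  have key := hopt _ hmass
  rw [cumReward_add_single 𝒮 μ hS₂, cumReward_add_single 𝒮 μ hS₁, add_le_add_iff_left,
    ← sum_inter_add_sum_sdiff S₂ S₁, ← sum_inter_add_sum_sdiff S₁ S₂, inter_comm,
    add_le_add_iff_left] at key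
  convert key using 2 with i hi i hi <;> rw [pulls_add_single 𝒮 hS₁]
  · rw [if_neg (mem_sdiff.1 hi).2]
  · rw [if_pos (mem_sdiff.1 hi).1]
end

theorem claim1_terminal_rewards_coincide_general
    (K : ℕ) (μ : Fin K → ℕ → ℝ) (𝒮 : Finset (Finset (Fin K))) (T : ℕ)
    (hmono : ∀ i, Monotone (μ i))
    (fstar : Finset (Fin K) → ℕ)
    (hsum : (∑ S ∈ 𝒮, fstar S) = T)
    (hopt : ∀ f : Finset (Fin K) → ℕ, (∑ S ∈ 𝒮, f S) = T →
      cumReward μ 𝒮 f ≤ cumReward μ 𝒮 fstar)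
    (S₁ S₂ : Finset (Fin K)) (hS₁ : S₁ ∈ 𝒮) (hS₂ : S₂ ∈ 𝒮)
    (hpos₁ : 1 ≤ fstar S₁) (hpos₂ : 1 ≤ fstar S₂) :
    (∑ i ∈ S₁ \ S₂, μ i (pulls 𝒮 fstar i)) = (∑ i ∈ S₂ \ S₁, μ i (pulls 𝒮 fstar i)) ∧
    (∑ i ∈ S₁, μ i (pulls 𝒮 fstar i)) = (∑ i ∈ S₂, μ i (pulls 𝒮 fstar i)) := by
  subst hsum
  have h₁₂ := sum_sdiff_succ_le_sum_sdiff 𝒮 μ hS₁ hS₂ fstar hpos₁ hopt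
  have h₂₁ := sum_sdiff_succ_le_sum_sdiff 𝒮 μ hS₂ hS₁ fstar hpos₂ hopt
  have hrise (s : Finset (Fin K)) :
      ∑ i ∈ s, μ i (pulls 𝒮 fstar i) ≤ ∑ i ∈ s, μ i (pulls 𝒮 fstar i + 1) :=
    sum_le_sum fun i _ => hmono i (Nat.le_succ _)
  have hdiff : ∑ i ∈ S₁ \ S₂, μ i (pulls 𝒮 fstar i) = ∑ i ∈ S₂ \ S₁, μ i (pulls 𝒮 fstar i) :=
    le_antisymm ((hrise _).trans h₂₁) ((hrise _).trans h₁₂)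
  refine ⟨hdiff, ?_⟩
  rw [← sum_inter_add_sum_sdiff S₁ S₂, ← sum_inter_add_sum_sdiff S₂ S₁, inter_comm, hdiff]

/-- (Claim 1) If `fstar` is an optimal allocation that pulls both `S₁` and `S₂` at least once,
then the terminal per-round rewards of the two selected super arms coincide. -/
theorem claim1_terminal_rewards_coincide
    (K : ℕ) (μ : Fin K → ℕ → ℝ) (𝒮 : Finset (Finset (Fin K))) (T : ℕ)
    (h𝒮 : 𝒮.Nonempty)
    (h0 : ∀ i n, 0 ≤ μ i n) (h1 : ∀ i n, μ i n ≤ 1)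
    (hmono : ∀ i, Monotone (μ i))
    (hconc : ∀ i n, μ i (n + 2) - μ i (n + 1) ≤ μ i (n + 1) - μ i n)
    (fstar : Finset (Fin K) → ℕ)
    (hsum : (∑ S ∈ 𝒮, fstar S) = T)
    (hopt : ∀ f : Finset (Fin K) → ℕ, (∑ S ∈ 𝒮, f S) = T →
      cumReward μ 𝒮 f ≤ cumReward μ 𝒮 fstar)
    (S₁ S₂ : Finset (Fin K)) (hS₁ : S₁ ∈ 𝒮) (hS₂ : S₂ ∈ 𝒮)
    (hpos₁ : 1 ≤ fstar S₁) (hpos₂ : 1 ≤ fstar S₂) :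
    (∑ i ∈ S₁ \ S₂, μ i (pulls 𝒮 fstar i)) = (∑ i ∈ S₂ \ S₁, μ i (pulls 𝒮 fstar i)) ∧
    (∑ i ∈ S₁, μ i (pulls 𝒮 fstar i)) = (∑ i ∈ S₂, μ i (pulls 𝒮 fstar i)) :=
  claim1_terminal_rewards_coincide_general K μ 𝒮 T hmono fstar hsum hopt S₁ S₂ hS₁ hS₂ hpos₁ hpos₂
end

section
/- (Claim 2) Let f* be an optimal allocation over horizon T and let S₁, S₂ ∈ 𝒮 be distinct with f*(S₁) ≥ 1 and f*(S₂) ≥ 1. Then the rewards of the base arms in S₁ \ S₂ are flat over the last f*(S₁) pulls: Σ_{i∈S₁\S₂} μ_i(N_i(f*) − f*(S₁) + 1) = Σ_{i∈S₁\S₂} μ_i(N_i(f*)). -/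
/-!
Write `N i` for the pull counts of the optimal allocation and `c = f*(S₁)`. Moving one pull from
`S₂` to `S₁` cannot help, so by monotonicity `Σ_{S₁ \ S₂} μ(N) ≤ Σ_{S₂ \ S₁} μ(N)`. Moving all `c`
pulls from `S₁` to `S₂` cannot help either: the gain on `S₂ \ S₁` is at least `c Σ_{S₂ \ S₁} μ(N)`,
and the loss on `S₁ \ S₂`, the rewards of the last `c` pulls, is at most
`Σ_{S₁ \ S₂} μ(N - c + 1) + (c - 1) Σ_{S₁ \ S₂} μ(N)`. Together these force
`Σ_{S₁ \ S₂} μ(N) ≤ Σ_{S₁ \ S₂} μ(N - c + 1)`; the reverse inequality is monotonicity.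
-/

open Finset

theorem sum_Icc_one_add_sum_Ioc (g : ℕ → ℝ) {m n : ℕ} (hmn : m ≤ n) :
    ∑ k ∈ Icc 1 m, g k + ∑ k ∈ Ioc m n, g k = ∑ k ∈ Icc 1 n, g k := by
  rw [← zero_add 1, Icc_add_one_left_eq_Ioc, Icc_add_one_left_eq_Ioc]
  exact sum_Ioc_consecutive g m.zero_le hmn

section Windows

variable {g : ℕ → ℝ}

theorem sum_Ioc_le_card_mul (hg : Monotone g) (a b : ℕ) :
    ∑ k ∈ Ioc a b, g k ≤ ((b - a : ℕ) : ℝ) * g b := by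
  simpa [Nat.card_Ioc] using sum_le_card_nsmul (Ioc a b) g (g b) fun k hk => hg (mem_Ioc.mp hk).2

theorem card_mul_le_sum_Ioc (hg : Monotone g) (a b : ℕ) :
    ((b - a : ℕ) : ℝ) * g a ≤ ∑ k ∈ Ioc a b, g k := by
  simpa [Nat.card_Ioc] using
    card_nsmul_le_sum (Ioc a b) g (g a) fun k hk => hg (mem_Ioc.mp hk).1.le

theorem sum_Ioc_sub_le (hg : Monotone g) {d m : ℕ} (hdm : d ≤ m) :
    ∑ k ∈ Ioc (m - d) m, g k ≤ g (m - d + 1) + ((d : ℝ) - 1) * g m := by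
  obtain ⟨k, rfl⟩ := Nat.exists_eq_add_of_le' hdm
  rw [Nat.add_sub_cancel]
  cases d with
  | zero => simpa using hg k.le_succ
  | succ e =>
    rw [← sum_Ioc_consecutive g (k.le_succ) (by omega), Nat.Ioc_succ_singleton, sum_singleton]
    have := sum_Ioc_le_card_mul hg (k + 1) (k + (e + 1))
    rw [show k + (e + 1) - (k + 1) = e by omega] at this
    push_cast
    linarith

end Windows

section Transfer

variable {α : Type*} [DecidableEq α]

def transfer (f : α → ℕ) (A B : α) (d : ℕ) (S : α) : ℕ :=
  if S = A then f S - d else if S = B then f S + d else f S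

variable {f : α → ℕ} {A B : α} {d : ℕ}

theorem transfer_add_ite (hAB : A ≠ B) (hd : d ≤ f A) (S : α) :
    transfer f A B d S + (if S = A then d else 0) = f S + (if S = B then d else 0) := by
  unfold transfer
  by_cases hSA : S = A
  · subst hSA
    simp only [↓reduceIte, hAB, add_zero]
    omega
  · by_cases hSB : S = B <;> simp [hSA, hSB, hAB.symm]

theorem sum_transfer_add_ite (hAB : A ≠ B) (hd : d ≤ f A) (s : Finset α) :
    ∑ S ∈ s, transfer f A B d S + (if A ∈ s then d else 0) =
      ∑ S ∈ s, f S + (if B ∈ s then d else 0) := by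
  simpa [sum_add_distrib, sum_ite_eq'] using sum_congr rfl fun S _ => transfer_add_ite hAB hd S

theorem sum_transfer {s : Finset α} (hA : A ∈ s) (hB : B ∈ s) (hAB : A ≠ B) (hd : d ≤ f A) :
    ∑ S ∈ s, transfer f A B d S = ∑ S ∈ s, f S := by
  simpa [hA, hB] using sum_transfer_add_ite hAB hd s

end Transfer

variable {K : ℕ} (μ : Fin K → ℕ → ℝ) (𝒮 : Finset (Finset (Fin K)))

theorem le_pulls {f : Finset (Fin K) → ℕ} {S : Finset (Fin K)} (hS : S ∈ 𝒮) {i : Fin K}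
    (hi : i ∈ S) : f S ≤ pulls 𝒮 f i :=
  single_le_sum (fun _ _ => Nat.zero_le _) (mem_filter.mpr ⟨hS, hi⟩)

variable {𝒮} {f : Finset (Fin K) → ℕ} {A B : Finset (Fin K)} {d : ℕ}

theorem pulls_transfer_add_ite (hA : A ∈ 𝒮) (hB : B ∈ 𝒮) (hAB : A ≠ B) (hd : d ≤ f A)
    (i : Fin K) :
    pulls 𝒮 (transfer f A B d) i + (if i ∈ A then d else 0) =
      pulls 𝒮 f i + (if i ∈ B then d else 0) := by
  simpa [pulls, hA, hB] using sum_transfer_add_ite hAB hd (𝒮.filter (fun S => i ∈ S))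

theorem cumReward_transfer (hA : A ∈ 𝒮) (hB : B ∈ 𝒮) (hAB : A ≠ B) (hd : d ≤ f A) :
    cumReward μ 𝒮 (transfer f A B d) = cumReward μ 𝒮 f
      + ∑ i ∈ B \ A, ∑ n ∈ Ioc (pulls 𝒮 f i) (pulls 𝒮 f i + d), μ i n
      - ∑ i ∈ A \ B, ∑ n ∈ Ioc (pulls 𝒮 f i - d) (pulls 𝒮 f i), μ i n := by
  have harm : ∀ i, ∑ n ∈ Icc 1 (pulls 𝒮 (transfer f A B d) i), μ i n =
      ∑ n ∈ Icc 1 (pulls 𝒮 f i), μ i n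
        + (if i ∈ B \ A then ∑ n ∈ Ioc (pulls 𝒮 f i) (pulls 𝒮 f i + d), μ i n else 0)
        - (if i ∈ A \ B then ∑ n ∈ Ioc (pulls 𝒮 f i - d) (pulls 𝒮 f i), μ i n else 0) := by
    intro i
    have h := pulls_transfer_add_ite hA hB hAB hd i
    generalize pulls 𝒮 (transfer f A B d) i = q at h ⊢
    generalize pulls 𝒮 f i = p at h ⊢
    by_cases hiA : i ∈ A <;> by_cases hiB : i ∈ B <;>
      simp only [mem_sdiff, hiA, hiB, not_true_eq_false, not_false_eq_true, and_false, and_true,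
        ↓reduceIte, add_zero, sub_zero] at h ⊢
    · rw [show q = p by omega]
    · obtain rfl : p = q + d := h.symm
      rw [Nat.add_sub_cancel, ← sum_Icc_one_add_sum_Ioc _ (Nat.le_add_right q d),
        add_sub_cancel_right]
    · rw [h, sum_Icc_one_add_sum_Ioc _ (Nat.le_add_right p d)]
    · rw [show q = p by omega]
  simp only [cumReward, harm, sum_add_distrib, sum_sub_distrib, sum_ite_mem, univ_inter]

def IsOptimalAllocation (μ : Fin K → ℕ → ℝ) (𝒮 : Finset (Finset (Fin K)))
    (fstar : Finset (Fin K) → ℕ) : Prop :=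
  ∀ f : Finset (Fin K) → ℕ, ∑ S ∈ 𝒮, f S = ∑ S ∈ 𝒮, fstar S →
    cumReward μ 𝒮 f ≤ cumReward μ 𝒮 fstar

variable {μ}

theorem mul_sum_le_sum_Ioc_of_isOptimalAllocation (hmono : ∀ i, Monotone (μ i))
    (hopt : IsOptimalAllocation μ 𝒮 f) (hA : A ∈ 𝒮) (hB : B ∈ 𝒮) (hAB : A ≠ B) (hd : d ≤ f A) :
    (d : ℝ) * ∑ i ∈ B \ A, μ i (pulls 𝒮 f i) ≤
      ∑ i ∈ A \ B, ∑ n ∈ Ioc (pulls 𝒮 f i - d) (pulls 𝒮 f i), μ i n := by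
  have hgain := hopt _ (sum_transfer hA hB hAB hd)
  rw [cumReward_transfer μ hA hB hAB hd] at hgain
  calc (d : ℝ) * ∑ i ∈ B \ A, μ i (pulls 𝒮 f i)
      ≤ ∑ i ∈ B \ A, ∑ n ∈ Ioc (pulls 𝒮 f i) (pulls 𝒮 f i + d), μ i n := by
        rw [mul_sum]
        exact sum_le_sum fun i _ => by
          simpa using card_mul_le_sum_Ioc (hmono i) (pulls 𝒮 f i) (pulls 𝒮 f i + d)
    _ ≤ _ := by linarith

theorem sum_sdiff_le_of_isOptimalAllocation (hmono : ∀ i, Monotone (μ i))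
    (hopt : IsOptimalAllocation μ 𝒮 f) (hA : A ∈ 𝒮) (hB : B ∈ 𝒮) (hAB : A ≠ B)
    (hpos : 1 ≤ f A) :
    ∑ i ∈ B \ A, μ i (pulls 𝒮 f i) ≤ ∑ i ∈ A \ B, μ i (pulls 𝒮 f i) := by
  have h := mul_sum_le_sum_Ioc_of_isOptimalAllocation hmono hopt hA hB hAB hpos
  rw [Nat.cast_one, one_mul] at h
  refine h.trans (sum_le_sum fun i hi => ?_)
  have hNi : 1 ≤ pulls 𝒮 f i := hpos.trans (le_pulls 𝒮 hA (mem_sdiff.mp hi).1)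
  simpa [Nat.sub_sub_self hNi] using sum_Ioc_le_card_mul (hmono i) (pulls 𝒮 f i - 1) (pulls 𝒮 f i)

theorem claim2_rewards_flat_general
    (K : ℕ) (μ : Fin K → ℕ → ℝ) (𝒮 : Finset (Finset (Fin K))) (T : ℕ)
    (hmono : ∀ i, Monotone (μ i))
    (fstar : Finset (Fin K) → ℕ)
    (hsum : (∑ S ∈ 𝒮, fstar S) = T)
    (hopt : ∀ f : Finset (Fin K) → ℕ, (∑ S ∈ 𝒮, f S) = T →
      cumReward μ 𝒮 f ≤ cumReward μ 𝒮 fstar)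
    (S₁ S₂ : Finset (Fin K)) (hS₁ : S₁ ∈ 𝒮) (hS₂ : S₂ ∈ 𝒮)
    (hne : S₁ ≠ S₂) (hpos₁ : 1 ≤ fstar S₁) (hpos₂ : 1 ≤ fstar S₂) :
    (∑ i ∈ S₁ \ S₂, μ i (pulls 𝒮 fstar i - fstar S₁ + 1)) =
      ∑ i ∈ S₁ \ S₂, μ i (pulls 𝒮 fstar i) := by
  set N := pulls 𝒮 fstar
  set c := fstar S₁
  have hopt' : IsOptimalAllocation μ 𝒮 fstar := fun f hf => hopt f (hf.trans hsum)
  have hcN : ∀ i ∈ S₁ \ S₂, c ≤ N i := fun i hi => le_pulls 𝒮 hS₁ (mem_sdiff.mp hi).1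
  have hmarginal := sum_sdiff_le_of_isOptimalAllocation hmono hopt' hS₂ hS₁ hne.symm hpos₂
  have hmove := mul_sum_le_sum_Ioc_of_isOptimalAllocation hmono hopt' hS₁ hS₂ hne le_rfl
  have hwindow : ∑ i ∈ S₁ \ S₂, ∑ n ∈ Ioc (N i - c) (N i), μ i n ≤
      ∑ i ∈ S₁ \ S₂, μ i (N i - c + 1) + ((c : ℝ) - 1) * ∑ i ∈ S₁ \ S₂, μ i (N i) := by
    rw [mul_sum, ← sum_add_distrib]
    exact sum_le_sum fun i hi => sum_Ioc_sub_le (hmono i) (hcN i hi)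
  have hscaled := mul_le_mul_of_nonneg_left hmarginal (Nat.cast_nonneg (α := ℝ) c)
  refine le_antisymm (sum_le_sum fun i hi => hmono i ?_) (by linarith)
  have := hcN i hi
  omega

/-- (Claim 2) If `fstar` is an optimal allocation that pulls the distinct super arms `S₁` and
`S₂` at least once each, then the rewards of the base arms in `S₁ \ S₂` are flat over the last
`fstar S₁` pulls. -/
theorem claim2_rewards_flat
    (K : ℕ) (μ : Fin K → ℕ → ℝ) (𝒮 : Finset (Finset (Fin K))) (T : ℕ)
    (h𝒮 : 𝒮.Nonempty)
    (h0 : ∀ i n, 0 ≤ μ i n) (h1 : ∀ i n, μ i n ≤ 1)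
    (hmono : ∀ i, Monotone (μ i))
    (hconc : ∀ i n, μ i (n + 2) - μ i (n + 1) ≤ μ i (n + 1) - μ i n)
    (fstar : Finset (Fin K) → ℕ)
    (hsum : (∑ S ∈ 𝒮, fstar S) = T)
    (hopt : ∀ f : Finset (Fin K) → ℕ, (∑ S ∈ 𝒮, f S) = T →
      cumReward μ 𝒮 f ≤ cumReward μ 𝒮 fstar)
    (S₁ S₂ : Finset (Fin K)) (hS₁ : S₁ ∈ 𝒮) (hS₂ : S₂ ∈ 𝒮)
    (hne : S₁ ≠ S₂) (hpos₁ : 1 ≤ fstar S₁) (hpos₂ : 1 ≤ fstar S₂) :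
    (∑ i ∈ S₁ \ S₂, μ i (pulls 𝒮 fstar i - fstar S₁ + 1)) =
      ∑ i ∈ S₁ \ S₂, μ i (pulls 𝒮 fstar i) :=
  claim2_rewards_flat_general K μ 𝒮 T hmono fstar hsum hopt S₁ S₂ hS₁ hS₂ hne hpos₁ hpos₂
end

section
/- (Two-armed worst-case lower bound, core of Lemma B.2) Let T be an integer divisible by 3 with T ≥ 12. For all integers s, n_A, n_B with 0 ≤ s ≤ T/3, s ≤ n_A ≤ T, and 0 ≤ n_B ≤ 2T/3 + s, we have max( Σ_{n=1}^{T} μ^A(n) − J_A(n_A), T/2 − J_B(n_B) ) ≥ T/32. -/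
open Finset

/-- Reward function of the rising arm on instance A: `μ^A(n) = 3n/(2T)` if `n ≤ 2T/3`,
and `1` otherwise. -/
noncomputable def muA (T n : ℕ) : ℝ := if 3 * n ≤ 2 * T then (3 * n : ℝ) / (2 * T) else 1

/-- Reward function of the rising arm on instance B: `μ^B(n) = 3n/(2T)` if `n ≤ T/3`,
and `1/2` otherwise. -/
noncomputable def muB (T n : ℕ) : ℝ := if 3 * n ≤ T then (3 * n : ℝ) / (2 * T) else 1 / 2

/-- Cumulative reward over horizon `T` on instance A when the constant arm (mean `1/2`) is
pulled `n₁` times and the rising arm the remaining `T - n₁` times. -/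
noncomputable def JA (T n₁ : ℕ) : ℝ := (n₁ : ℝ) / 2 + ∑ n ∈ Finset.Icc 1 (T - n₁), muA T n

/-- Cumulative reward over horizon `T` on instance B when the constant arm (mean `1/2`) is
pulled `n₁` times and the rising arm the remaining `T - n₁` times. -/
noncomputable def JB (T n₁ : ℕ) : ℝ := (n₁ : ℝ) / 2 + ∑ n ∈ Finset.Icc 1 (T - n₁), muB T n

/-! With `T = 3m` every partial reward sum is explicit: a triangular number `k(k+1)/(4m)` on the
ramp of the rising arm, plus a linear term on its plateau. On instance A, pulling the constant arm
at least `m` times costs regret at least `m/2`, and pulling it `n < m` times costs exactly `n/2`,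
so the bound holds unless `16 s < 3m`. In that case instance B has its rising arm pulled
`k ≥ m - s` times; on the plateau (`k > m`) the regret is `(m-1)/4`, and on the ramp it is
`k/2 - k(k+1)/(4m)`, concave in `k` and hence at least `3m/32` on `[m - s, m]`. -/

section Ramp

variable {f : ℕ → ℝ} {a b : ℝ} {c k : ℕ}

theorem sum_Icc_ramp_of_le (hf : ∀ n ≤ c, f n = a * n) (hk : k ≤ c) :
    ∑ n ∈ Icc 1 k, f n = a * (k * (k + 1) / 2) := by
  induction k with
  | zero => simp
  | succ k ih =>
    rw [sum_Icc_succ_top (by omega), ih (by omega), hf (k + 1) hk]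
    push_cast
    ring

theorem sum_Icc_ramp_of_ge (hlo : ∀ n ≤ c, f n = a * n) (hhi : ∀ n, c < n → f n = b)
    (hk : c ≤ k) : ∑ n ∈ Icc 1 k, f n = a * (c * (c + 1) / 2) + b * (k - c) := by
  induction k, hk using Nat.le_induction with
  | base => simp [sum_Icc_ramp_of_le hlo le_rfl]
  | succ k hck ih =>
    rw [sum_Icc_succ_top (by omega), ih, hhi (k + 1) (by omega)]
    push_cast
    ring

end Ramp

section Sums

variable {m k : ℕ}

theorem muA_three_mul_of_le {n : ℕ} (hn : n ≤ 2 * m) :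
    muA (3 * m) n = (2 * m : ℝ)⁻¹ * n := by
  rw [muA, if_pos (by omega)]
  push_cast
  ring

theorem muA_three_mul_of_lt {n : ℕ} (hn : 2 * m < n) : muA (3 * m) n = 1 := by
  rw [muA, if_neg (by omega)]

theorem muB_three_mul_of_le {n : ℕ} (hn : n ≤ m) : muB (3 * m) n = (2 * m : ℝ)⁻¹ * n := by
  rw [muB, if_pos (by omega)]
  push_cast
  ring

theorem muB_three_mul_of_lt {n : ℕ} (hn : m < n) : muB (3 * m) n = 1 / 2 := by
  rw [muB, if_neg (by omega)]

theorem sum_Icc_muA_of_le (hk : k ≤ 2 * m) :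
    ∑ n ∈ Icc 1 k, muA (3 * m) n = k * (k + 1) / (4 * m) := by
  rw [sum_Icc_ramp_of_le (fun n hn ↦ muA_three_mul_of_le hn) hk]
  ring

theorem sum_Icc_muA_of_ge (hm : 0 < m) (hk : 2 * m ≤ k) :
    ∑ n ∈ Icc 1 k, muA (3 * m) n = k - m + 1 / 2 := by
  rw [sum_Icc_ramp_of_ge (fun n hn ↦ muA_three_mul_of_le hn)
    (fun n hn ↦ muA_three_mul_of_lt hn) hk]
  have : (m : ℝ) ≠ 0 := by positivity
  field_simp
  push_cast
  ring

theorem sum_Icc_muB_of_le (hk : k ≤ m) :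
    ∑ n ∈ Icc 1 k, muB (3 * m) n = k * (k + 1) / (4 * m) := by
  rw [sum_Icc_ramp_of_le (fun n hn ↦ muB_three_mul_of_le hn) hk]
  ring

theorem sum_Icc_muB_of_ge (hm : 0 < m) (hk : m ≤ k) :
    ∑ n ∈ Icc 1 k, muB (3 * m) n = k / 2 - m / 4 + 1 / 4 := by
  rw [sum_Icc_ramp_of_ge (fun n hn ↦ muB_three_mul_of_le hn)
    (fun n hn ↦ muB_three_mul_of_lt hn) hk]
  have : (m : ℝ) ≠ 0 := by positivity
  field_simp
  ring

end Sums

/-- The regret on instance A, whose optimal policy always pulls the rising arm. -/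
noncomputable def regretA (T n₁ : ℕ) : ℝ := (∑ n ∈ Icc 1 T, muA T n) - JA T n₁

/-- The regret on instance B, whose optimal policy always pulls the constant arm. -/
noncomputable def regretB (T n₁ : ℕ) : ℝ := T / 2 - JB T n₁

section Regret

variable {m n : ℕ}

theorem regretA_three_mul (hm : 0 < m) :
    regretA (3 * m) n = 2 * m + 1 / 2 - n / 2 - ∑ k ∈ Icc 1 (3 * m - n), muA (3 * m) k := by
  rw [regretA, JA, sum_Icc_muA_of_ge hm (by omega)]
  push_cast
  ring

theorem half_le_regretA (hm : 0 < m) (h₁ : m ≤ n) (h₂ : n ≤ 3 * m) :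
    (m : ℝ) / 2 ≤ regretA (3 * m) n := by
  rw [regretA_three_mul hm, sum_Icc_muA_of_le (by omega)]
  obtain ⟨k, rfl⟩ : ∃ k, n = 3 * m - k := ⟨3 * m - n, by omega⟩
  rw [show 3 * m - (3 * m - k) = k by omega]
  push_cast [Nat.cast_sub (show k ≤ 3 * m by omega)]
  have hk : (k : ℝ) ≤ 2 * m := by exact_mod_cast (show k ≤ 2 * m by omega)
  have hbound : (k : ℝ) * (k + 1) / (4 * m) ≤ (k + 1) / 2 := by
    rw [div_le_iff₀ (by positivity)]
    nlinarith
  linarith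

theorem regretA_eq_half (hm : 0 < m) (h : n ≤ m) : regretA (3 * m) n = n / 2 := by
  rw [regretA_three_mul hm, sum_Icc_muA_of_ge hm (by omega)]
  push_cast [Nat.cast_sub (show n ≤ 3 * m by omega)]
  ring

theorem regretB_eq_of_le (hm : 0 < m) (h : n ≤ 2 * m) : regretB (3 * m) n = (m - 1) / 4 := by
  rw [regretB, JB, sum_Icc_muB_of_ge hm (by omega)]
  push_cast [Nat.cast_sub (show n ≤ 3 * m by omega)]
  ring

theorem three_mul_div_32_le_regretB {s : ℕ} (hm : 3 ≤ m) (hs : 16 * s < 3 * m)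
    (h : n ≤ 2 * m + s) : 3 * (m : ℝ) / 32 ≤ regretB (3 * m) n := by
  have hm' : (3 : ℝ) ≤ m := by exact_mod_cast hm
  rcases le_or_gt n (2 * m) with hn | hn
  · rw [regretB_eq_of_le (by omega) hn]
    linarith
  rw [regretB, JB, sum_Icc_muB_of_le (by omega)]
  obtain ⟨k, rfl⟩ : ∃ k, n = 3 * m - k := ⟨3 * m - n, by omega⟩
  rw [show 3 * m - (3 * m - k) = k by omega]
  push_cast [Nat.cast_sub (show k ≤ 3 * m by omega)]
  have hs' : 16 * (s : ℝ) < 3 * m := by exact_mod_cast hs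
  have hk_lo : (m : ℝ) ≤ k + s := by exact_mod_cast (show m ≤ k + s by omega)
  have hk_hi : (k : ℝ) ≤ m := by exact_mod_cast (show k ≤ m by omega)
  -- the regret `k/2 - k(k+1)/(4m)` is concave in `k`, and `m - s ≤ k ≤ m`
  have hconcave : 0 ≤ ((k : ℝ) + s - m) * (m - k) := mul_nonneg (by linarith) (by linarith)
  have hbound : (k : ℝ) * (k + 1) / (4 * m) ≤ k / 2 - 3 * m / 32 := by
    rw [div_le_iff₀ (by positivity)]
    have hm0 : (0 : ℝ) ≤ m := by positivity
    have hsk : (0 : ℝ) ≤ s * k := by positivity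
    nlinarith [mul_le_mul_of_nonneg_right hs'.le hm0, mul_le_mul_of_nonneg_right hm' hm0]
  linarith

end Regret

theorem two_armed_worst_case_lower_bound_general
    (T : ℕ) (hT3 : 3 ∣ T) (hT : 12 ≤ T)
    (s nA nB : ℕ) (hsA : s ≤ nA) (hAT : nA ≤ T)
    (hB : nB ≤ 2 * T / 3 + s) :
    (T : ℝ) / 32 ≤
      max ((∑ n ∈ Finset.Icc 1 T, muA T n) - JA T nA) ((T : ℝ) / 2 - JB T nB) := by
  obtain ⟨m, rfl⟩ := hT3
  have hm : 4 ≤ m := by omega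
  change _ ≤ max (regretA (3 * m) nA) (regretB (3 * m) nB)
  push_cast
  rcases le_or_gt m nA with hmA | hAm
  · have hA := half_le_regretA (by omega) hmA hAT
    exact le_max_of_le_left (by linarith [(Nat.cast_nonneg m : (0 : ℝ) ≤ m)])
  rcases le_or_gt (3 * m) (16 * s) with hs16 | hs16
  · refine le_max_of_le_left ?_
    rw [regretA_eq_half (by omega) hAm.le]
    have hs16' : (3 * m : ℝ) ≤ 16 * s := by exact_mod_cast hs16
    have hsA' : (s : ℝ) ≤ nA := by exact_mod_cast hsA
    linarith
  · exact le_max_of_le_right (three_mul_div_32_le_regretB (by omega) hs16 (by omega))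

/-- (Two-armed worst-case lower bound, core of Lemma B.2) For `T` divisible by 3 with
`T ≥ 12`, and any integers `0 ≤ s ≤ T/3`, `s ≤ nA ≤ T`, `0 ≤ nB ≤ 2T/3 + s`, the larger of
the two instances' regrets is at least `T/32`. -/
theorem two_armed_worst_case_lower_bound
    (T : ℕ) (hT3 : 3 ∣ T) (hT : 12 ≤ T)
    (s nA nB : ℕ) (hs : s ≤ T / 3) (hsA : s ≤ nA) (hAT : nA ≤ T)
    (hB : nB ≤ 2 * T / 3 + s) :
    (T : ℝ) / 32 ≤
      max ((∑ n ∈ Finset.Icc 1 T, muA T n) - JA T nA) ((T : ℝ) / 2 - JB T nB) :=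
  two_armed_worst_case_lower_bound_general T hT3 hT s nA nB hsA hAT hB
end

section
/- (Case A bound in Lemma B.2) Let T be a positive integer divisible by 3. For all integers s, n_A with 0 ≤ s ≤ T/3 and s ≤ n_A ≤ T: J_A(n_A) ≤ s/2 + Σ_{n=1}^{T−s} μ^A(n), and consequently the regret on instance A satisfies Σ_{n=1}^{T} μ^A(n) − J_A(n_A) ≥ s/2. -/
open Finset

/-!
For `T = 3m` the partial sums `F(k) = ∑_{n ≤ k} μ^A(n)` have the closed form
`F(k) = k(k+1)/(4m)` for `k ≤ 2m` and `F(k) = k - m + 1/2` for `k ≥ 2m`. Hence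
`J_A(n) ≤ 2m + 1/2 - min(n, m)/2`: for `n ≥ m` the rising arm is pulled `k ≤ 2m` times and
its average reward `(k+1)/(4m)` is at most `1/2`. Since `s/2 + F(3m - s) = 2m + 1/2 - s/2` and
`s ≤ min(nA, m)`, the first bound follows, and the second because `F(3m) = 2m + 1/2`.
-/

section

variable {m : ℕ}

theorem sum_muA_of_le_two_mul (hm : 0 < m) {k : ℕ} (hk : k ≤ 2 * m) :
    ∑ n ∈ Icc 1 k, muA (3 * m) n = k * (k + 1) / (4 * m) := by
  induction k with
  | zero => simp
  | succ k ih =>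
    rw [sum_Icc_succ_top (by omega), ih (by omega), muA, if_pos (by omega)]
    have : (m : ℝ) ≠ 0 := by positivity
    push_cast
    field_simp
    ring

theorem sum_muA_of_two_mul_le (hm : 0 < m) {k : ℕ} (hk : 2 * m ≤ k) :
    ∑ n ∈ Icc 1 k, muA (3 * m) n = k - m + 1 / 2 := by
  induction k, hk using Nat.le_induction with
  | base =>
    rw [sum_muA_of_le_two_mul hm le_rfl]
    have : (m : ℝ) ≠ 0 := by positivity
    push_cast
    field_simp
    ring
  | succ k hk ih =>
    rw [sum_Icc_succ_top (by omega), ih, muA, if_neg (by omega)]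
    push_cast
    ring

theorem JA_three_mul_le (hm : 0 < m) {n : ℕ} (hn : n ≤ 3 * m) :
    JA (3 * m) n ≤ 2 * m + 1 / 2 - (min n m : ℕ) / 2 := by
  have hcast : ((3 * m - n : ℕ) : ℝ) = 3 * m - n := by push_cast [Nat.cast_sub hn]; ring
  rw [JA]
  rcases le_total m n with hmn | hnm
  · have hk : 3 * m - n ≤ 2 * m := by omega
    have hmean : ((3 * m - n : ℕ) : ℝ) * ((3 * m - n : ℕ) + 1) / (4 * m)
        ≤ ((3 * m - n : ℕ) + 1) / 2 := by
      have : ((3 * m - n : ℕ) : ℝ) ≤ 2 * m := by exact_mod_cast hk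
      rw [div_le_div_iff₀ (by positivity) two_pos]
      nlinarith
    rw [sum_muA_of_le_two_mul hm hk, min_eq_right hmn]
    rw [hcast] at hmean ⊢
    linarith
  · rw [sum_muA_of_two_mul_le hm (by omega), hcast, min_eq_left hnm]
    linarith

end

/-- (Case A bound in Lemma B.2) For integers `0 ≤ s ≤ T/3` and `s ≤ nA ≤ T`:
`JA(nA) ≤ s/2 + Σ_{n=1}^{T-s} muA(n)`, and consequently the regret on instance A satisfies
`Σ_{n=1}^{T} muA(n) - JA(nA) ≥ s/2`. -/
theorem caseA_bound
    (T : ℕ) (hT0 : 0 < T) (hT3 : 3 ∣ T)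
    (s nA : ℕ) (hs : s ≤ T / 3) (hsA : s ≤ nA) (hAT : nA ≤ T) :
    JA T nA ≤ (s : ℝ) / 2 + (∑ n ∈ Finset.Icc 1 (T - s), muA T n) ∧
    (s : ℝ) / 2 ≤ (∑ n ∈ Finset.Icc 1 T, muA T n) - JA T nA := by
  obtain ⟨m, rfl⟩ := hT3
  have hm : 0 < m := by omega
  have hs_min : (s : ℝ) ≤ (min nA m : ℕ) := by exact_mod_cast le_min hsA (by omega)
  have hopt : ∑ n ∈ Icc 1 (3 * m - s), muA (3 * m) n = 2 * m + 1 / 2 - s := by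
    rw [sum_muA_of_two_mul_le hm (by omega), Nat.cast_sub (by omega)]
    push_cast
    ring
  have hfull : ∑ n ∈ Icc 1 (3 * m), muA (3 * m) n = 2 * m + 1 / 2 := by
    rw [sum_muA_of_two_mul_le hm (by omega)]
    push_cast
    ring
  have hJ := JA_three_mul_le hm hAT
  constructor <;> linarith
end

section
/- (Case B bound in Lemma B.2) Let T be a positive integer divisible by 3. For all integers s, n_B with 0 ≤ s ≤ T/3 and 0 ≤ n_B ≤ 2T/3 + s: J_B(n_B) ≤ (2T/3 + s)/2 + Σ_{n=1}^{T/3 − s} μ^B(n) = 3s²/(4T) − 3s/(4T) + 5T/12 + 1/4, and consequently the regret on instance B satisfies T/2 − J_B(n_B) ≥ −3s²/(4T) + 3s/(4T) + T/12 − 1/4. -/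
open Finset

/-
The constant arm never pays less than the rising arm of instance B, since `μ^B ≤ 1/2`; hence
`J_B` is monotone and `J_B(n_B) ≤ J_B(2T/3 + s)`. With `2T/3 + s` constant pulls the rising arm is
pulled only `T/3 - s` times, all on its linear part, so the bound is an arithmetic sum.
-/

theorem Finset.sum_Icc_one_natCast_mul_two {R : Type*} [CommSemiring R] (k : ℕ) :
    (∑ n ∈ Icc 1 k, (n : R)) * 2 = k * (k + 1) := by
  induction k with
  | zero => simp
  | succ k ih =>
    rw [sum_Icc_succ_top (by omega), add_mul, ih]
    push_cast
    ring

theorem muB_le_half (T n : ℕ) : muB T n ≤ 1 / 2 := by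
  unfold muB
  split_ifs with h
  · rcases Nat.eq_zero_or_pos T with rfl | hT
    · simp
    rw [div_le_div_iff₀ (by positivity) two_pos]
    have h' : (3 * n : ℝ) ≤ T := by exact_mod_cast h
    linarith
  · rfl

theorem JB_le_JB_succ (T n : ℕ) : JB T n ≤ JB T (n + 1) := by
  unfold JB
  rcases le_or_gt T n with h | h
  · rw [Nat.sub_eq_zero_of_le h, Nat.sub_eq_zero_of_le (h.trans n.le_succ)]
    push_cast
    linarith
  · rw [show T - n = T - (n + 1) + 1 by omega, sum_Icc_succ_top (by omega)]
    push_cast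
    linarith [muB_le_half T (T - (n + 1) + 1)]

theorem JB_monotone (T : ℕ) : Monotone (JB T) :=
  monotone_nat_of_le_succ (JB_le_JB_succ T)

theorem sum_Icc_muB_of_three_mul_le {T k : ℕ} (hk : 3 * k ≤ T) :
    ∑ n ∈ Icc 1 k, muB T n = 3 * k * (k + 1) / (4 * T) := by
  have hlinear : ∀ n ∈ Icc 1 k, muB T n = 3 / (2 * T) * n := fun n hn => by
    rw [muB, if_pos (by grind)]
    ring
  have hgauss : ∑ n ∈ Icc 1 k, (n : ℝ) = k * (k + 1) / 2 := by
    rw [eq_div_iff two_ne_zero, sum_Icc_one_natCast_mul_two]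
  rw [sum_congr rfl hlinear, ← mul_sum, hgauss]
  ring

/-- (Case B bound in Lemma B.2) For integers `0 ≤ s ≤ T/3` and `0 ≤ nB ≤ 2T/3 + s`:
`JB(nB) ≤ (2T/3 + s)/2 + Σ_{n=1}^{T/3-s} muB(n)`, this bound equals
`3s²/(4T) - 3s/(4T) + 5T/12 + 1/4`, and consequently the regret on instance B satisfies
`T/2 - JB(nB) ≥ -3s²/(4T) + 3s/(4T) + T/12 - 1/4`. -/
theorem caseB_bound
    (T : ℕ) (hT0 : 0 < T) (hT3 : 3 ∣ T)
    (s nB : ℕ) (hs : s ≤ T / 3) (hB : nB ≤ 2 * T / 3 + s) :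
    JB T nB ≤ ((2 * T / 3 + s : ℕ) : ℝ) / 2 + (∑ n ∈ Finset.Icc 1 (T / 3 - s), muB T n) ∧
    ((2 * T / 3 + s : ℕ) : ℝ) / 2 + (∑ n ∈ Finset.Icc 1 (T / 3 - s), muB T n) =
      3 * (s : ℝ) ^ 2 / (4 * T) - 3 * (s : ℝ) / (4 * T) + 5 * (T : ℝ) / 12 + 1 / 4 ∧
    -(3 * (s : ℝ) ^ 2) / (4 * T) + 3 * (s : ℝ) / (4 * T) + (T : ℝ) / 12 - 1 / 4 ≤
      (T : ℝ) / 2 - JB T nB := by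
  obtain ⟨m, rfl⟩ := hT3
  have hm : (0 : ℝ) < m := by exact_mod_cast (by omega : 0 < m)
  rw [show 3 * m / 3 = m by omega] at hs ⊢
  rw [show 2 * (3 * m) / 3 = 2 * m by omega] at hB ⊢
  have htop : JB (3 * m) (2 * m + s) =
      ((2 * m + s : ℕ) : ℝ) / 2 + ∑ n ∈ Icc 1 (m - s), muB (3 * m) n := by
    rw [JB, show 3 * m - (2 * m + s) = m - s by omega]
  have hvalue : ((2 * m + s : ℕ) : ℝ) / 2 + ∑ n ∈ Icc 1 (m - s), muB (3 * m) n =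
      3 * (s : ℝ) ^ 2 / (4 * (3 * m : ℕ)) - 3 * (s : ℝ) / (4 * (3 * m : ℕ)) +
        5 * ((3 * m : ℕ) : ℝ) / 12 + 1 / 4 := by
    rw [sum_Icc_muB_of_three_mul_le (by omega), Nat.cast_sub hs]
    push_cast
    field_simp
    ring
  have hle := htop ▸ JB_monotone (3 * m) hB
  refine ⟨hle, hvalue, ?_⟩
  rw [hvalue] at hle
  rw [neg_div]
  linarith
end

section
/- (Theorem 3, combinatorial lower bound Ω(LT)) Let L ≥ 1 be an integer and let T be an integer divisible by 3 with T ≥ 12. For any functions s, n_A, n_B : {1,…,L} → ℕ with s_j ≤ T/3, s_j ≤ n_{A,j} ≤ T, and n_{B,j} ≤ 2T/3 + s_j for every j, there exists a choice c : {1,…,L} → {A, B} such that Σ_{j=1}^{L} R_{c(j)}(j) ≥ L·T/32, where R_A(j) = Σ_{n=1}^{T} μ^A(n) − J_A(n_{A,j}) and R_B(j) = T/2 − J_B(n_{B,j}). -/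
open Finset

/-!
Write `T = 3m`. Both rising arms are ramps `n ↦ min n k / (2m)`, saturating at `k = 2m` (A)
and `k = m` (B), so their partial sums have closed forms. On A the regret is at least
`min n₁ m / 2`, which is large once the constant arm was pulled `n₁ ≥ s ≥ m/2` times. On B
the regret is large as soon as the rising arm was pulled more than `m/2` times, which the
constraint `n_B ≤ 2m + s` guarantees when `s < m/2`. So in every coordinate one of the two
instances costs at least `3m/32 = T/32`, and the adversary picks it coordinatewise.
-/

theorem sum_Icc_min_of_le {k K : ℕ} (hK : K ≤ k) :
    ∑ n ∈ Icc 1 K, min (n : ℝ) k = K * (K + 1) / 2 := by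
  induction K with
  | zero => simp
  | succ K ih =>
    rw [sum_Icc_succ_top (by omega), ih (by omega), min_eq_left (by exact_mod_cast hK)]
    push_cast
    ring

theorem sum_Icc_min_of_ge {k K : ℕ} (hK : k ≤ K) :
    ∑ n ∈ Icc 1 K, min (n : ℝ) k = k * (k + 1) / 2 + k * (K - k) := by
  induction K, hK using Nat.le_induction with
  | base => rw [sum_Icc_min_of_le le_rfl]; ring
  | succ K hkK ih =>
    rw [sum_Icc_succ_top (by omega), ih, min_eq_right (by exact_mod_cast hkK.trans K.le_succ)]
    push_cast
    ring

theorem muA_three_mul {m : ℕ} (hm : 0 < m) (n : ℕ) :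
    muA (3 * m) n = min (n : ℝ) (2 * m : ℕ) / (2 * m) := by
  have hm' : (0 : ℝ) < m := by exact_mod_cast hm
  unfold muA
  split_ifs with h
  · rw [min_eq_left (by exact_mod_cast (by omega : n ≤ 2 * m))]
    push_cast
    field_simp
  · rw [min_eq_right (by exact_mod_cast (by omega : 2 * m ≤ n))]
    push_cast
    field_simp

theorem muB_three_mul {m : ℕ} (hm : 0 < m) (n : ℕ) :
    muB (3 * m) n = min (n : ℝ) m / (2 * m) := by
  have hm' : (0 : ℝ) < m := by exact_mod_cast hm
  unfold muB
  split_ifs with h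
  · rw [min_eq_left (by exact_mod_cast (by omega : n ≤ m))]
    push_cast
    field_simp
  · rw [min_eq_right (by exact_mod_cast (by omega : m ≤ n))]
    field_simp

theorem sum_muA_of_le {m K : ℕ} (hm : 0 < m) (hK : K ≤ 2 * m) :
    ∑ n ∈ Icc 1 K, muA (3 * m) n = K * (K + 1) / (4 * m) := by
  simp_rw [muA_three_mul hm, ← sum_div, sum_Icc_min_of_le hK]
  ring

theorem sum_muA_of_ge {m K : ℕ} (hm : 0 < m) (hK : 2 * m ≤ K) :
    ∑ n ∈ Icc 1 K, muA (3 * m) n = K - m + 1 / 2 := by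
  have hm' : (0 : ℝ) < m := by exact_mod_cast hm
  simp_rw [muA_three_mul hm, ← sum_div, sum_Icc_min_of_ge hK]
  push_cast
  field_simp
  ring

theorem sum_muB_of_le {m K : ℕ} (hm : 0 < m) (hK : K ≤ m) :
    ∑ n ∈ Icc 1 K, muB (3 * m) n = K * (K + 1) / (4 * m) := by
  simp_rw [muB_three_mul hm, ← sum_div, sum_Icc_min_of_le hK]
  ring

theorem sum_muB_of_ge {m K : ℕ} (hm : 0 < m) (hK : m ≤ K) :
    ∑ n ∈ Icc 1 K, muB (3 * m) n = K / 2 - (m - 1) / 4 := by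
  have hm' : (0 : ℝ) < m := by exact_mod_cast hm
  simp_rw [muB_three_mul hm, ← sum_div, sum_Icc_min_of_ge hK]
  field_simp
  ring

theorem min_div_two_le_regretA {m n₁ : ℕ} (hm : 0 < m) (h : n₁ ≤ 3 * m) :
    min (n₁ : ℝ) m / 2 ≤ ∑ n ∈ Icc 1 (3 * m), muA (3 * m) n - JA (3 * m) n₁ := by
  have hm' : (0 : ℝ) < m := by exact_mod_cast hm
  rw [JA, sum_muA_of_ge hm (by omega)]
  rcases le_total n₁ m with hn | hn
  · rw [sum_muA_of_ge hm (by omega), Nat.cast_sub h, min_eq_left (by exact_mod_cast hn)]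
    push_cast
    linarith
  · rw [sum_muA_of_le hm (by omega), Nat.cast_sub h, min_eq_right (by exact_mod_cast hn)]
    have hn' : (m : ℝ) ≤ n₁ := by exact_mod_cast hn
    have hK : (n₁ : ℝ) ≤ 3 * m := by exact_mod_cast h
    -- the excess over `m / 2` is `(n₁ - m) (3m - n₁ + 1) / (4m)`
    have key : 0 ≤ (n₁ - m : ℝ) * (3 * m - n₁ + 1) / (4 * m) := by
      apply div_nonneg <;> nlinarith
    push_cast
    field_simp at key ⊢
    linarith

theorem three_mul_div_32_le_regretB_s9 {m n₁ : ℕ} (hm : 2 ≤ m) (h : m < 2 * (3 * m - n₁)) :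
    (3 * m : ℝ) / 32 ≤ (3 * m : ℝ) / 2 - JB (3 * m) n₁ := by
  have hm' : (2 : ℝ) ≤ m := by exact_mod_cast hm
  have hn : n₁ ≤ 3 * m := by omega
  rw [JB]
  rcases le_total m (3 * m - n₁) with hK | hK
  · rw [sum_muB_of_ge (by omega) hK, Nat.cast_sub hn]
    push_cast
    linarith
  · rw [sum_muB_of_le (by omega) hK]
    have hK₁ : (m : ℝ) + 1 ≤ 2 * (3 * m - n₁ : ℕ) := by exact_mod_cast h
    have hK₂ : ((3 * m - n₁ : ℕ) : ℝ) ≤ m := by exact_mod_cast hK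
    have hn₁ : (n₁ : ℝ) = 3 * m - (3 * m - n₁ : ℕ) := by
      rw [Nat.cast_sub hn]
      push_cast
      ring
    generalize ((3 * m - n₁ : ℕ) : ℝ) = K at *
    rw [hn₁]
    -- the regret is `K (2m - 1 - K) / (4m)`, concave in `K ∈ [(m + 1) / 2, m]`
    have key : 3 * m / 32 ≤ K * (2 * m - 1 - K) / (4 * m) := by
      rw [le_div_iff₀ (by positivity)]
      nlinarith [mul_nonneg (sub_nonneg.2 hK₁) (sub_nonneg.2 hK₂)]
    field_simp at key ⊢
    linarith

theorem exists_regret_ge {T s nA nB : ℕ} (hT3 : 3 ∣ T) (hT : 6 ≤ T) (hsA : s ≤ nA)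
    (hAT : nA ≤ T) (hB : nB ≤ 2 * T / 3 + s) :
    ∃ b : Bool, (T : ℝ) / 32 ≤
      if b then (∑ n ∈ Icc 1 T, muA T n) - JA T nA else (T : ℝ) / 2 - JB T nB := by
  obtain ⟨m, rfl⟩ := hT3
  by_cases hs : m ≤ 2 * s
  · refine ⟨true, ?_⟩
    have hA : (m : ℝ) ≤ 2 * nA := by exact_mod_cast hs.trans (by omega)
    have hmin : (m : ℝ) / 2 ≤ min (nA : ℝ) m := le_min (by linarith) (by linarith)
    have := min_div_two_le_regretA (by omega) hAT
    rw [if_pos rfl]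
    push_cast
    linarith
  · refine ⟨false, ?_⟩
    push_cast
    exact three_mul_div_32_le_regretB_s9 (by omega) (by omega)

theorem combinatorial_lower_bound_general
    (L T : ℕ) (hT3 : 3 ∣ T) (hT : 12 ≤ T)
    (s nA nB : Fin L → ℕ)
    (hsA : ∀ j, s j ≤ nA j) (hAT : ∀ j, nA j ≤ T)
    (hB : ∀ j, nB j ≤ 2 * T / 3 + s j) :
    ∃ c : Fin L → Bool,
      (L : ℝ) * T / 32 ≤ ∑ j : Fin L,
        (if c j then (∑ n ∈ Finset.Icc 1 T, muA T n) - JA T (nA j)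
         else (T : ℝ) / 2 - JB T (nB j)) := by
  choose c hc using fun j => exists_regret_ge hT3 (by omega) (hsA j) (hAT j) (hB j)
  refine ⟨c, ?_⟩
  calc (L : ℝ) * T / 32 = ∑ _j : Fin L, (T : ℝ) / 32 := by simp; ring
    _ ≤ _ := sum_le_sum fun j _ => hc j

/-- (Theorem 3, combinatorial lower bound Ω(LT)) In the `L`-fold product of the two-armed
construction, for any per-coordinate pull counts there is an adversarial choice of instance
(A or B, encoded by `true`/`false`) in each coordinate making the total regret at least
`L·T/32`. -/
theorem combinatorial_lower_bound
    (L T : ℕ) (hL : 1 ≤ L) (hT3 : 3 ∣ T) (hT : 12 ≤ T)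
    (s nA nB : Fin L → ℕ)
    (hs : ∀ j, s j ≤ T / 3) (hsA : ∀ j, s j ≤ nA j) (hAT : ∀ j, nA j ≤ T)
    (hB : ∀ j, nB j ≤ 2 * T / 3 + s j) :
    ∃ c : Fin L → Bool,
      (L : ℝ) * T / 32 ≤ ∑ j : Fin L,
        (if c j then (∑ n ∈ Finset.Icc 1 T, muA T n) - JA T (nA j)
         else (T : ℝ) / 2 - JB T (nB j)) :=
  combinatorial_lower_bound_general L T hT3 hT s nA nB hsA hAT hB
end

section
/- For every real c with 1 < c < 2, setting a = (2−c)^{1/(c−1)} (so that 0 < a < 1), the following strict inequality holds: (1−a)^{2−c}/(c−1) + (1−a)^{2−c}/(2−c) + a^{2−c}/(c−1) − 1/(c−1) − 1/(2−c) > 0. -/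
/-! Since `a ^ (c - 1) = 2 - c`, we get `a ^ (2 - c) = a / (2 - c)`, and because
`(c - 1) + (2 - c) = 1` the whole expression collapses to
`((1 - a) ^ (2 - c) - (1 - a)) / ((c - 1) * (2 - c))`. This is positive because
`x < x ^ p` for `0 < x < 1` and `p < 1`. -/

open Real

lemma Real.rpow_one_div_rpow_one_sub {b e : ℝ} (hb : 0 < b) (he : e ≠ 0) :
    (b ^ (1 / e)) ^ (1 - e) = b ^ (1 / e) / b := by
  rw [← rpow_mul hb.le, show 1 / e * (1 - e) = 1 / e - 1 by field_simp, rpow_sub hb, rpow_one]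

/-- Positivity of the coefficient (A) of `T^(2-c)` in the proof of Theorem 4: for every
real `1 < c < 2`, setting `a = (2-c)^(1/(c-1))`,
`(1-a)^(2-c)/(c-1) + (1-a)^(2-c)/(2-c) + a^(2-c)/(c-1) - 1/(c-1) - 1/(2-c) > 0`. -/
theorem termA_positive (c : ℝ) (hc1 : 1 < c) (hc2 : c < 2) (a : ℝ)
    (ha : a = (2 - c) ^ (1 / (c - 1))) :
    0 < (1 - a) ^ (2 - c) / (c - 1) + (1 - a) ^ (2 - c) / (2 - c) + a ^ (2 - c) / (c - 1)
        - 1 / (c - 1) - 1 / (2 - c) := by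
  have hs : 0 < c - 1 := by linarith
  have ht : 0 < 2 - c := by linarith
  have ha_pos : 0 < a := ha ▸ rpow_pos_of_pos ht _
  have ha_lt_one : a < 1 := ha ▸ rpow_lt_one ht.le (by linarith) (by positivity)
  have hpow : a ^ (2 - c) = a / (2 - c) := by
    have := rpow_one_div_rpow_one_sub ht hs.ne'
    rwa [show 1 - (c - 1) = 2 - c by ring, ← ha] at this
  have hgap : 1 - a < (1 - a) ^ (2 - c) :=
    self_lt_rpow_of_lt_one (by linarith) (by linarith) (by linarith)
  calc 0 < ((1 - a) ^ (2 - c) - (1 - a)) / ((c - 1) * (2 - c)) :=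
        div_pos (sub_pos.2 hgap) (by positivity)
    _ = _ := by
        rw [hpow]
        field_simp
        ring
end

section
/- For all reals σ > 0 and ε with 0 < ε ≤ 1, there exists a constant C > 0 such that for every integer T ≥ 2: Σ_{n=1}^{T} 2·min( σT·√( 6·log(4T) / (ε n)³ ), 1 ) ≤ C·T^{2/3}·(log T)^{1/3}. -/
/-!
The summand is `min (a n^(-3/2)) 1` with `a = σT √(6 log(4T) / ε³)`. Bounding it by `1` for
`n ≤ a^(2/3)` and summing the tail against the telescoping sequence `2 / √n` (a discrete form of
`∫ x^(-3/2) dx`) gives at most `3 a^(2/3) + 1`, and `a^(2/3) = O(T^(2/3) (log T)^(1/3))` since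
`log (4T) ≤ 3 log T`.
-/

open Finset Real

lemma inv_sqrt_pow_three_le_sub {x : ℝ} (hx : 0 < x) :
    1 / √((x + 1) ^ 3) ≤ 2 / √x - 2 / √(x + 1) := by
  have hs : 0 < √x := sqrt_pos.mpr hx
  have ht : 0 < √(x + 1) := sqrt_pos.mpr (by linarith)
  have hst : √x ≤ √(x + 1) := sqrt_le_sqrt (by linarith)
  have hs2 : √x ^ 2 = x := sq_sqrt hx.le
  have ht2 : √(x + 1) ^ 2 = x + 1 := sq_sqrt (by linarith)
  rw [show (x + 1) ^ 3 = (x + 1) ^ 2 * (x + 1) by ring, sqrt_mul' _ (by linarith),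
    sqrt_sq (by linarith), div_sub_div _ _ hs.ne' ht.ne',
    div_le_div_iff₀ (by positivity) (by positivity)]
  -- `√(x+1) - √x = 1 / (√(x+1) + √x) ≥ 1 / (2 √(x+1))`
  nlinarith [mul_le_mul_of_nonneg_left hst ht.le, mul_pos hs ht]

lemma sum_Ioc_inv_sqrt_pow_three_le_sub {N M : ℕ} (hN : 0 < N) (hNM : N ≤ M) :
    ∑ n ∈ Ioc N M, 1 / √((n : ℝ) ^ 3) ≤ 2 / √(N : ℝ) - 2 / √(M : ℝ) := by
  induction M, hNM using Nat.le_induction with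
  | base => simp
  | succ M hNM ih =>
    rw [sum_Ioc_succ_top (by omega)]
    have := inv_sqrt_pow_three_le_sub (x := M) (by exact_mod_cast hN.trans_le hNM)
    push_cast
    linarith

lemma sum_Ioc_inv_sqrt_pow_three_le {N : ℕ} (hN : 0 < N) (M : ℕ) :
    ∑ n ∈ Ioc N M, 1 / √((n : ℝ) ^ 3) ≤ 2 / √(N : ℝ) := by
  rcases le_or_gt N M with hNM | hMN
  · linarith [sum_Ioc_inv_sqrt_pow_three_le_sub hN hNM, show 0 ≤ 2 / √(M : ℝ) by positivity]
  · simp only [Ioc_eq_empty_of_le hMN.le, sum_empty]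
    positivity

/-- The terms with `n ≤ ⌈a^(2/3)⌉` contribute at most `1` each; the others are summed by
`sum_Ioc_inv_sqrt_pow_three_le`. -/
lemma sum_Icc_min_div_sqrt_pow_three_le {a : ℝ} (ha : 0 < a) (T : ℕ) :
    ∑ n ∈ Icc 1 T, min (a / √((n : ℝ) ^ 3)) 1 ≤ 3 * a ^ ((2 : ℝ) / 3) + 1 := by
  set b := a ^ ((2 : ℝ) / 3)
  have hb : 0 < b := by positivity
  set N := ⌈b⌉₊
  have hN : 0 < N := Nat.ceil_pos.mpr hb
  have hsqrtN : a ^ ((1 : ℝ) / 3) ≤ √(N : ℝ) := by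
    rw [show a ^ ((1 : ℝ) / 3) = √b by
      rw [sqrt_eq_rpow, ← rpow_mul ha.le]; norm_num]
    exact sqrt_le_sqrt (Nat.le_ceil b)
  have hhead : ∑ n ∈ (Icc 1 T).filter (· ≤ N), min (a / √((n : ℝ) ^ 3)) 1 ≤ b + 1 :=
    calc _ ≤ ∑ n ∈ (Icc 1 T).filter (· ≤ N), (1 : ℝ) := sum_le_sum fun _ _ => min_le_right _ _
      _ ≤ ((Icc 1 N).card : ℝ) := by
        rw [sum_const, nsmul_one]
        gcongr
        intro n hn
        simp only [mem_filter, mem_Icc] at hn ⊢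
        omega
      _ ≤ b + 1 := by
        rw [Nat.card_Icc, Nat.add_sub_cancel]
        exact (Nat.ceil_lt_add_one hb.le).le
  have htail : ∑ n ∈ (Icc 1 T).filter (¬ · ≤ N), min (a / √((n : ℝ) ^ 3)) 1 ≤ 2 * b :=
    calc _ ≤ ∑ n ∈ (Icc 1 T).filter (¬ · ≤ N), a / √((n : ℝ) ^ 3) :=
          sum_le_sum fun _ _ => min_le_left _ _
      _ ≤ ∑ n ∈ Ioc N T, a / √((n : ℝ) ^ 3) := by
          refine sum_le_sum_of_subset_of_nonneg (fun n hn => ?_) fun _ _ _ => by positivity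
          simp only [mem_filter, mem_Icc, mem_Ioc] at hn ⊢
          omega
      _ = a * ∑ n ∈ Ioc N T, 1 / √((n : ℝ) ^ 3) := by simp only [mul_sum, mul_one_div]
      _ ≤ a * (2 / a ^ ((1 : ℝ) / 3)) := by
          gcongr
          exact (sum_Ioc_inv_sqrt_pow_three_le hN T).trans (by gcongr)
      _ = 2 * b := by
          have : a / a ^ ((1 : ℝ) / 3) = b := by
            rw [div_eq_iff (by positivity), ← rpow_add ha]
            norm_num
          rw [mul_div_left_comm, this, mul_comm]
  rw [← sum_filter_add_sum_filter_not _ (· ≤ N)]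
  linarith

lemma log_four_mul_le_three_mul_log {T : ℝ} (hT : 2 ≤ T) : log (4 * T) ≤ 3 * log T := by
  rw [show 3 * log T = log (T ^ 2 * T) by
    rw [log_mul (by positivity) (by positivity), log_pow]; push_cast; ring]
  exact log_le_log (by positivity) (by nlinarith)

lemma rpow_two_thirds_le_of_sq_le {a c x : ℝ} (ha : 0 ≤ a) (hc : 0 ≤ c) (hx : 0 ≤ x)
    (h : a ^ 2 ≤ c * x) : a ^ ((2 : ℝ) / 3) ≤ c ^ ((1 : ℝ) / 3) * x ^ ((1 : ℝ) / 3) := by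
  rw [show a ^ ((2 : ℝ) / 3) = (a ^ 2) ^ ((1 : ℝ) / 3) by
    rw [← rpow_natCast, ← rpow_mul ha]; norm_num, ← mul_rpow hc hx]
  exact rpow_le_rpow (by positivity) h (by norm_num)

lemma one_le_sq_mul_log {T : ℝ} (hT : 2 ≤ T) : 1 ≤ T ^ 2 * log T := by
  have := log_le_log (by norm_num) hT
  nlinarith [log_two_gt_d9]

lemma rpow_two_thirds_mul_rpow_one_third {x y : ℝ} (hx : 0 ≤ x) (hy : 0 ≤ y) :
    x ^ ((2 : ℝ) / 3) * y ^ ((1 : ℝ) / 3) = (x ^ 2 * y) ^ ((1 : ℝ) / 3) := by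
  rw [mul_rpow (by positivity) hy, ← rpow_natCast, ← rpow_mul hx]
  norm_num

theorem bonus_sum_bound_general (σ ε : ℝ) (hσ : 0 < σ) (hε0 : 0 < ε) :
    ∃ C : ℝ, 0 < C ∧ ∀ T : ℕ, 2 ≤ T →
      (∑ n ∈ Finset.Icc 1 T,
          2 * min (σ * (T : ℝ) *
            Real.sqrt (6 * Real.log (4 * (T : ℝ)) / (ε * (n : ℝ)) ^ 3)) 1) ≤
        C * (T : ℝ) ^ ((2 : ℝ) / 3) * Real.log (T : ℝ) ^ ((1 : ℝ) / 3) := by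
  set C₀ := (18 * σ ^ 2 / ε ^ 3) ^ ((1 : ℝ) / 3)
  refine ⟨6 * C₀ + 2, by positivity, fun T hT => ?_⟩
  have hT2 : (2 : ℝ) ≤ T := by exact_mod_cast hT
  have hlog : 0 < log T := log_pos (by linarith)
  have hlog4 : 0 < log (4 * T) := log_pos (by linarith)
  set a := σ * T * √(6 * log (4 * T) / ε ^ 3)
  have ha : 0 < a := by positivity
  have hsum : ∑ n ∈ Icc 1 T, 2 * min (σ * T * √(6 * log (4 * T) / (ε * n) ^ 3)) 1
      = 2 * ∑ n ∈ Icc 1 T, min (a / √((n : ℝ) ^ 3)) 1 := by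
    rw [mul_sum]
    refine sum_congr rfl fun n _ => ?_
    rw [mul_pow, ← div_div, sqrt_div' _ (by positivity), ← mul_div_assoc]
  have hscale : a ^ 2 ≤ 18 * σ ^ 2 / ε ^ 3 * (T ^ 2 * log T) := by
    rw [mul_pow, sq_sqrt (by positivity), mul_div_assoc', div_mul_eq_mul_div,
      div_le_div_iff_of_pos_right (by positivity)]
    nlinarith [sq_nonneg (σ * T), log_four_mul_le_three_mul_log hT2]
  have hb := rpow_two_thirds_le_of_sq_le ha.le (by positivity) (by positivity) hscale
  have hR : 1 ≤ ((T : ℝ) ^ 2 * log T) ^ ((1 : ℝ) / 3) :=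
    one_le_rpow (one_le_sq_mul_log hT2) (by norm_num)
  rw [hsum, mul_assoc _ _ (log T ^ _), rpow_two_thirds_mul_rpow_one_third (by positivity) hlog.le]
  nlinarith [sum_Icc_min_div_sqrt_pow_three_le ha T]

/-- (Bound on the cumulative exploration-bonus term (B2) in the proof of Theorem 2) For all
reals `σ > 0` and `0 < ε ≤ 1` there is a constant `C > 0` such that for every integer `T ≥ 2`:
`Σ_{n=1}^{T} 2·min(σT·√(6·log(4T)/(εn)³), 1) ≤ C·T^(2/3)·(log T)^(1/3)`. -/
theorem bonus_sum_bound (σ ε : ℝ) (hσ : 0 < σ) (hε0 : 0 < ε) (hε1 : ε ≤ 1) :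
    ∃ C : ℝ, 0 < C ∧ ∀ T : ℕ, 2 ≤ T →
      (∑ n ∈ Finset.Icc 1 T,
          2 * min (σ * (T : ℝ) *
            Real.sqrt (6 * Real.log (4 * (T : ℝ)) / (ε * (n : ℝ)) ^ 3)) 1) ≤
        C * (T : ℝ) ^ ((2 : ℝ) / 3) * Real.log (T : ℝ) ^ ((1 : ℝ) / 3) :=
  bonus_sum_bound_general σ ε hσ hε0
end
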